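/- arXiv:1401.1147 — 4 statements merged into one kernel-verified Lean document; each statement's English description precedes it below -/
import Mathlib

section
/- Sewing lemma (existence): Let E be a Banach space, T > 0, and let μ be a continuous E-valued two-index map on {0 ≤ s ≤ t ≤ T} satisfying the almost-additivity bound |μ_{ts} − (μ_{tu} + μ_{us})| ≤ c₁|t−s|^ζ for all 0 ≤ s ≤ u ≤ t ≤ T, with c₁ ≥ 0 and ζ > 1. Then there exists a unique path x : [0,T] → E with x_0 = 0 and a constant C depending only on ζ such that |x_t − x_s − μ_{ts}| ≤ C c₁ |t−s|^ζ for all 0 ≤ s ≤ t ≤ T. -/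
/-!
Riemann sums of `μ` over the dyadic partitions of `[s, t]` converge: splitting every cell of
the level-`n` partition in two changes the sum by at most `2 c₁ (t - s)^ζ (2^(1-ζ))^n`, a
geometric sequence since `ζ > 1`. The limit `Ξ(s, t)` (`sewingLimit μ s t`) lies within
`2 c₁ (t - s)^ζ / (1 - 2^(1-ζ))` of `μ t s`, and it is additive at the points of every uniform
grid of `[s, t]`, because the Riemann sums over a grid refined `2^n` times split along it.
The path `x t = Ξ(0, t)` is a uniform limit of continuous functions, hence continuous, so the
estimate for `x t - x s - μ t s`, valid at the grid points `s` of `[0, t]`, extends to all `s`.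
For uniqueness, the difference `z` of two such paths satisfies `‖z t - z s‖ ≤ K (t - s)^ζ`, and
telescoping over `m` equal steps gives `‖z t - z 0‖ ≤ K t^ζ m^(1-ζ) → 0`.
-/

open Finset Filter Topology

theorem sum_range_mul_eq_sum_sum {M : Type*} [AddCommMonoid M] (f : ℕ → M) (m n : ℕ) :
    ∑ k ∈ range (m * n), f k = ∑ j ∈ range m, ∑ i ∈ range n, f (j * n + i) := by
  induction m with
  | zero => simp
  | succ m ih => rw [Nat.succ_mul, sum_range_add, ih, sum_range_succ]

theorem two_rpow_one_sub_lt_one {ζ : ℝ} (hζ : 1 < ζ) : (2 : ℝ) ^ (1 - ζ) < 1 :=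
  Real.rpow_lt_one_of_one_lt_of_neg one_lt_two (by linarith)

noncomputable def sewingConstant (ζ : ℝ) : ℝ := 2 / (1 - 2 ^ (1 - ζ))

theorem sewingConstant_pos {ζ : ℝ} (hζ : 1 < ζ) : 0 < sewingConstant ζ :=
  div_pos two_pos (sub_pos.2 (two_rpow_one_sub_lt_one hζ))

theorem mul_div_rpow_eq {x N ζ : ℝ} (hx : 0 ≤ x) (hN : 0 < N) :
    N * (x / N) ^ ζ = x ^ ζ * N ^ (1 - ζ) := by
  rw [Real.div_rpow hx hN.le, Real.rpow_sub hN, Real.rpow_one]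
  ring

noncomputable def gridPoint (s t : ℝ) (m k : ℕ) : ℝ := s + k * (t - s) / m

section GridPoint

variable {s t : ℝ} {m k : ℕ}

@[simp] theorem gridPoint_zero : gridPoint s t m 0 = s := by simp [gridPoint]

theorem gridPoint_self (hm : m ≠ 0) : gridPoint s t m m = t := by
  simp only [gridPoint]
  field_simp
  ring

theorem gridPoint_succ_sub : gridPoint s t m (k + 1) - gridPoint s t m k = (t - s) / m := by
  simp only [gridPoint]; push_cast; ring

theorem monotone_gridPoint (hst : s ≤ t) : Monotone (gridPoint s t m) := by
  intro i j hij
  simp only [gridPoint]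
  gcongr

theorem gridPoint_mem_Icc (hst : s ≤ t) (hk : k ≤ m) : gridPoint s t m k ∈ Set.Icc s t := by
  refine ⟨by simpa using monotone_gridPoint (m := m) hst (Nat.zero_le k), ?_⟩
  rcases eq_or_ne m 0 with rfl | hm
  · simpa [Nat.le_zero.1 hk] using hst
  · simpa [gridPoint_self hm] using monotone_gridPoint (s := s) (t := t) (m := m) hst hk

theorem gridPoint_bounds_of_lt (hst : s ≤ t) (hk : k < m) :
    s ≤ gridPoint s t m k ∧ gridPoint s t m k ≤ gridPoint s t m (k + 1) ∧
      gridPoint s t m (k + 1) ≤ t :=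
  ⟨(gridPoint_mem_Icc hst hk.le).1, monotone_gridPoint hst k.le_succ,
    (gridPoint_mem_Icc hst hk).2⟩

theorem continuous_gridPoint : Continuous fun t => gridPoint s t m k := by
  unfold gridPoint
  fun_prop

theorem gridPoint_mul (hm : m ≠ 0) {n : ℕ} (hn : n ≠ 0) (j i : ℕ) :
    gridPoint s t (m * n) (j * n + i)
      = gridPoint (gridPoint s t m j) (gridPoint s t m (j + 1)) n i := by
  simp only [gridPoint]
  push_cast
  field_simp
  ring

theorem gridPoint_gridPoint_left (hk : k ≠ 0) (j : ℕ) :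
    gridPoint s (gridPoint s t m k) k j = gridPoint s t m j := by
  rcases eq_or_ne (m : ℝ) 0 with hm | hm
  · simp [gridPoint, hm]
  · simp only [gridPoint]
    field_simp
    ring

theorem gridPoint_gridPoint_right (hkm : k < m) (i : ℕ) :
    gridPoint (gridPoint s t m k) t (m - k) i = gridPoint s t m (k + i) := by
  have hm : (m : ℝ) ≠ 0 := Nat.cast_ne_zero.2 (by omega)
  have hmk : ((m - k : ℕ) : ℝ) ≠ 0 := Nat.cast_ne_zero.2 (by omega)
  simp only [gridPoint]
  rw [Nat.cast_sub hkm.le] at hmk ⊢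
  field_simp
  push_cast
  ring

theorem le_of_le_gridPoint {f g : ℝ → ℝ} (hf : ContinuousOn f (Set.Icc s t))
    (hg : ContinuousOn g (Set.Icc s t))
    (h : ∀ m k : ℕ, k ≤ m → f (gridPoint s t m k) ≤ g (gridPoint s t m k))
    {v : ℝ} (hv : v ∈ Set.Icc s t) : f v ≤ g v := by
  set a := (v - s) / (t - s)
  have ha : a ≤ 1 := div_le_one_of_le₀ (by linarith [hv.2]) (by linarith [hv.1.trans hv.2])
  set u : ℕ → ℝ := fun n => gridPoint s t (n + 1) ⌊a * (n + 1 : ℕ)⌋₊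
  have hk : ∀ n : ℕ, ⌊a * (n + 1 : ℕ)⌋₊ ≤ n + 1 := fun n =>
    Nat.floor_le_of_le (mul_le_of_le_one_left (Nat.cast_nonneg _) ha)
  have hu_mem : ∀ n, u n ∈ Set.Icc s t := fun n =>
    gridPoint_mem_Icc (hv.1.trans hv.2) (hk n)
  have hu : Tendsto u atTop (𝓝[Set.Icc s t] v) := by
    refine tendsto_nhdsWithin_iff.2 ⟨?_, Eventually.of_forall hu_mem⟩
    have hfloor := (tendsto_nat_floor_mul_div_atTop (div_nonneg (sub_nonneg.2 hv.1)
      (sub_nonneg.2 (hv.1.trans hv.2)))).comp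
      ((tendsto_natCast_atTop_atTop (R := ℝ)).comp (tendsto_add_atTop_nat 1))
    have hlim := (hfloor.const_mul (t - s)).const_add s
    rw [mul_div_cancel_of_imp' fun h => by linarith [hv.1, hv.2, sub_eq_zero.1 h],
      add_sub_cancel] at hlim
    refine hlim.congr fun n => ?_
    simp only [u, gridPoint, Function.comp_apply]
    ring
  exact le_of_tendsto_of_tendsto' ((hf v hv).tendsto.comp hu) ((hg v hv).tendsto.comp hu)
    fun n => h _ _ (hk n)

end GridPoint

section Sewing

variable {E : Type*} [NormedAddCommGroup E]

def AlmostAdditiveOn (μ : ℝ → ℝ → E) (T c ζ : ℝ) : Prop :=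
  ∀ s u t : ℝ, 0 ≤ s → s ≤ u → u ≤ t → t ≤ T → ‖μ t s - (μ t u + μ u s)‖ ≤ c * (t - s) ^ ζ

noncomputable def uniformSum (μ : ℝ → ℝ → E) (m : ℕ) (s t : ℝ) : E :=
  ∑ k ∈ range m, μ (gridPoint s t m (k + 1)) (gridPoint s t m k)

noncomputable def sewingLimit (μ : ℝ → ℝ → E) (s t : ℝ) : E :=
  limUnder atTop fun n : ℕ => uniformSum μ (2 ^ n) s t

theorem uniformSum_one (μ : ℝ → ℝ → E) (s t : ℝ) : uniformSum μ 1 s t = μ t s := by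
  simp [uniformSum, gridPoint_self one_ne_zero]

theorem uniformSum_mul (μ : ℝ → ℝ → E) {m n : ℕ} (hm : m ≠ 0) (hn : n ≠ 0) (s t : ℝ) :
    uniformSum μ (m * n) s t
      = ∑ j ∈ range m, uniformSum μ n (gridPoint s t m j) (gridPoint s t m (j + 1)) := by
  simp only [uniformSum, sum_range_mul_eq_sum_sum, ← gridPoint_mul hm hn, add_assoc]

variable {μ : ℝ → ℝ → E} {T c ζ s t : ℝ}

theorem continuousOn_uniformSum
    (hμc : ContinuousOn (fun p : ℝ × ℝ => μ p.1 p.2) {p | 0 ≤ p.2 ∧ p.2 ≤ p.1 ∧ p.1 ≤ T})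
    (hs : 0 ≤ s) (m : ℕ) : ContinuousOn (uniformSum μ m s) (Set.Icc s T) := by
  refine continuousOn_finsetSum _ fun k hk => hμc.comp
    ((continuous_gridPoint.prodMk continuous_gridPoint).continuousOn) fun t ht => ?_
  obtain ⟨hlo, hmid, hhi⟩ := gridPoint_bounds_of_lt ht.1 (mem_range.1 hk)
  exact ⟨hs.trans hlo, hmid, hhi.trans ht.2⟩

namespace AlmostAdditiveOn

theorem apply_self (hμ : AlmostAdditiveOn μ T c ζ) (hζ : ζ ≠ 0) {t : ℝ} (h0 : 0 ≤ t)
    (hT : t ≤ T) : μ t t = 0 := by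
  have h := hμ t t t h0 le_rfl le_rfl hT
  rwa [sub_self, Real.zero_rpow hζ, mul_zero, sub_add_cancel_left, norm_neg,
    norm_le_zero_iff] at h

theorem norm_sum_sub_le (hμ : AlmostAdditiveOn μ T c ζ) (hc : 0 ≤ c) (hζ : 0 < ζ)
    {p : ℕ → ℝ} (hp : Monotone p) (h0 : 0 ≤ p 0) {n : ℕ} (hT : p n ≤ T) :
    ‖∑ k ∈ range n, μ (p (k + 1)) (p k) - μ (p n) (p 0)‖ ≤ c * n * (p n - p 0) ^ ζ := by
  induction n with
  | zero => simp [hμ.apply_self hζ.ne' h0 hT]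
  | succ n ih =>
    have hn : p n ≤ p (n + 1) := hp n.le_succ
    have hdefect := hμ (p 0) (p n) (p (n + 1)) h0 (hp n.zero_le) hn hT
    have hmono : (p n - p 0) ^ ζ ≤ (p (n + 1) - p 0) ^ ζ :=
      Real.rpow_le_rpow (sub_nonneg.2 (hp n.zero_le)) (by linarith) hζ.le
    calc ‖∑ k ∈ range (n + 1), μ (p (k + 1)) (p k) - μ (p (n + 1)) (p 0)‖
        = ‖(∑ k ∈ range n, μ (p (k + 1)) (p k) - μ (p n) (p 0))
            - (μ (p (n + 1)) (p 0) - (μ (p (n + 1)) (p n) + μ (p n) (p 0)))‖ := by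
          rw [sum_range_succ]; congr 1; abel
      _ ≤ c * n * (p n - p 0) ^ ζ + c * (p (n + 1) - p 0) ^ ζ :=
          (norm_sub_le _ _).trans (add_le_add (ih (hn.trans hT)) hdefect)
      _ ≤ c * ↑(n + 1) * (p (n + 1) - p 0) ^ ζ := by
          push_cast
          nlinarith [mul_le_mul_of_nonneg_left hmono (mul_nonneg hc n.cast_nonneg)]

theorem norm_uniformSum_sub_le (hμ : AlmostAdditiveOn μ T c ζ) (hc : 0 ≤ c) (hζ : 0 < ζ)
    (hs : 0 ≤ s) (hst : s ≤ t) (ht : t ≤ T) {m : ℕ} (hm : m ≠ 0) :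
    ‖uniformSum μ m s t - μ t s‖ ≤ c * m * (t - s) ^ ζ := by
  simpa [uniformSum, gridPoint_self hm] using
    hμ.norm_sum_sub_le hc hζ (monotone_gridPoint (m := m) hst) (by simpa using hs)
      (n := m) (by simpa [gridPoint_self hm] using ht)

theorem norm_uniformSum_mul_sub_le (hμ : AlmostAdditiveOn μ T c ζ) (hc : 0 ≤ c) (hζ : 0 < ζ)
    (hs : 0 ≤ s) (hst : s ≤ t) (ht : t ≤ T) {N m : ℕ} (hN : N ≠ 0) (hm : m ≠ 0) :
    ‖uniformSum μ (N * m) s t - uniformSum μ N s t‖ ≤ c * m * (t - s) ^ ζ * N ^ (1 - ζ) := by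
  have hpiece : ∀ j ∈ range N,
      ‖uniformSum μ m (gridPoint s t N j) (gridPoint s t N (j + 1))
        - μ (gridPoint s t N (j + 1)) (gridPoint s t N j)‖ ≤ c * m * ((t - s) / N) ^ ζ := by
    intro j hj
    obtain ⟨hlo, hmid, hhi⟩ := gridPoint_bounds_of_lt hst (mem_range.1 hj)
    simpa only [gridPoint_succ_sub] using
      hμ.norm_uniformSum_sub_le hc hζ (hs.trans hlo) hmid (hhi.trans ht) hm
  calc ‖uniformSum μ (N * m) s t - uniformSum μ N s t‖
      ≤ ∑ j ∈ range N, ‖uniformSum μ m (gridPoint s t N j) (gridPoint s t N (j + 1))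
          - μ (gridPoint s t N (j + 1)) (gridPoint s t N j)‖ := by
        rw [uniformSum_mul μ hN hm, uniformSum, ← sum_sub_distrib]
        exact norm_sum_le _ _
    _ ≤ N * (c * m * ((t - s) / N) ^ ζ) := by simpa using sum_le_sum hpiece
    _ = c * m * (t - s) ^ ζ * N ^ (1 - ζ) := by
        rw [mul_left_comm, mul_div_rpow_eq (sub_nonneg.2 hst) (by positivity)]
        ring

theorem norm_uniformSum_two_pow_mul_sub_le (hμ : AlmostAdditiveOn μ T c ζ) (hc : 0 ≤ c)
    (hζ : 0 < ζ) (hs : 0 ≤ s) (hst : s ≤ t) (ht : t ≤ T) {m : ℕ} (hm : m ≠ 0) (n : ℕ) :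
    ‖uniformSum μ (2 ^ n * m) s t - uniformSum μ (2 ^ n) s t‖
      ≤ c * m * (t - s) ^ ζ * ((2 : ℝ) ^ (1 - ζ)) ^ n := by
  have h := hμ.norm_uniformSum_mul_sub_le hc hζ hs hst ht (pow_ne_zero n two_ne_zero) hm
  rwa [Nat.cast_pow, Nat.cast_ofNat, ← Real.rpow_pow_comm zero_le_two] at h

theorem dist_uniformSum_two_pow_succ_le (hμ : AlmostAdditiveOn μ T c ζ) (hc : 0 ≤ c)
    (hζ : 0 < ζ) (hs : 0 ≤ s) (hst : s ≤ t) (ht : t ≤ T) (n : ℕ) :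
    dist (uniformSum μ (2 ^ n) s t) (uniformSum μ (2 ^ (n + 1)) s t)
      ≤ 2 * c * (t - s) ^ ζ * ((2 : ℝ) ^ (1 - ζ)) ^ n := by
  rw [dist_comm, dist_eq_norm, pow_succ]
  simpa [mul_comm 2 c] using hμ.norm_uniformSum_two_pow_mul_sub_le hc hζ hs hst ht two_ne_zero n

variable [CompleteSpace E]

theorem tendsto_uniformSum_sewingLimit (hμ : AlmostAdditiveOn μ T c ζ) (hc : 0 ≤ c)
    (hζ : 1 < ζ) (hs : 0 ≤ s) (hst : s ≤ t) (ht : t ≤ T) :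
    Tendsto (fun n : ℕ => uniformSum μ (2 ^ n) s t) atTop (𝓝 (sewingLimit μ s t)) :=
  (cauchySeq_of_le_geometric _ _ (two_rpow_one_sub_lt_one hζ)
    (hμ.dist_uniformSum_two_pow_succ_le hc (by linarith) hs hst ht)).tendsto_limUnder

theorem norm_uniformSum_sub_sewingLimit_le (hμ : AlmostAdditiveOn μ T c ζ) (hc : 0 ≤ c)
    (hζ : 1 < ζ) (hs : 0 ≤ s) (hst : s ≤ t) (ht : t ≤ T) (n : ℕ) :
    ‖uniformSum μ (2 ^ n) s t - sewingLimit μ s t‖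
      ≤ 2 * c * (t - s) ^ ζ * ((2 : ℝ) ^ (1 - ζ)) ^ n / (1 - 2 ^ (1 - ζ)) := by
  rw [← dist_eq_norm]
  exact dist_le_of_le_geometric_of_tendsto _ _
    (two_rpow_one_sub_lt_one hζ)
    (hμ.dist_uniformSum_two_pow_succ_le hc (by linarith) hs hst ht)
    (hμ.tendsto_uniformSum_sewingLimit hc hζ hs hst ht) n

theorem norm_sub_sewingLimit_le (hμ : AlmostAdditiveOn μ T c ζ) (hc : 0 ≤ c)
    (hζ : 1 < ζ) (hs : 0 ≤ s) (hst : s ≤ t) (ht : t ≤ T) :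
    ‖μ t s - sewingLimit μ s t‖ ≤ sewingConstant ζ * c * (t - s) ^ ζ := by
  have h := hμ.norm_uniformSum_sub_sewingLimit_le hc hζ hs hst ht 0
  rw [pow_zero, pow_zero, uniformSum_one] at h
  exact h.trans_eq (by rw [sewingConstant]; ring)

theorem sewingLimit_self (hμ : AlmostAdditiveOn μ T c ζ) (hc : 0 ≤ c) (hζ : 1 < ζ)
    (hs : 0 ≤ s) (ht : s ≤ T) : sewingLimit μ s s = 0 := by
  have h := hμ.norm_sub_sewingLimit_le hc hζ hs le_rfl ht
  rw [sub_self, Real.zero_rpow (by linarith), mul_zero, hμ.apply_self (by linarith) hs ht,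
    zero_sub, norm_neg, norm_le_zero_iff] at h
  exact h

theorem tendsto_uniformSum_two_pow_mul_sewingLimit (hμ : AlmostAdditiveOn μ T c ζ)
    (hc : 0 ≤ c) (hζ : 1 < ζ) (hs : 0 ≤ s) (hst : s ≤ t) (ht : t ≤ T) {m : ℕ} (hm : m ≠ 0) :
    Tendsto (fun n : ℕ => uniformSum μ (2 ^ n * m) s t) atTop (𝓝 (sewingLimit μ s t)) := by
  have hgeom :
      Tendsto (fun n : ℕ => c * m * (t - s) ^ ζ * ((2 : ℝ) ^ (1 - ζ)) ^ n) atTop (𝓝 0) := by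
    simpa using (tendsto_pow_atTop_nhds_zero_of_lt_one (by positivity)
      (two_rpow_one_sub_lt_one hζ)).const_mul
      (c * m * (t - s) ^ ζ)
  have hdiff := squeeze_zero_norm
    (hμ.norm_uniformSum_two_pow_mul_sub_le hc (by linarith) hs hst ht hm) hgeom
  simpa using hdiff.add (hμ.tendsto_uniformSum_sewingLimit hc hζ hs hst ht)

theorem sewingLimit_eq_sum (hμ : AlmostAdditiveOn μ T c ζ) (hc : 0 ≤ c) (hζ : 1 < ζ)
    (hs : 0 ≤ s) (hst : s ≤ t) (ht : t ≤ T) {m : ℕ} (hm : m ≠ 0) :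
    sewingLimit μ s t
      = ∑ j ∈ range m, sewingLimit μ (gridPoint s t m j) (gridPoint s t m (j + 1)) := by
  have hpieces : Tendsto (fun n : ℕ => uniformSum μ (m * 2 ^ n) s t) atTop
      (𝓝 (∑ j ∈ range m, sewingLimit μ (gridPoint s t m j) (gridPoint s t m (j + 1)))) := by
    simp only [uniformSum_mul μ hm (pow_ne_zero _ two_ne_zero)]
    refine tendsto_finsetSum _ fun j hj => ?_
    obtain ⟨hlo, hmid, hhi⟩ := gridPoint_bounds_of_lt hst (mem_range.1 hj)
    exact hμ.tendsto_uniformSum_sewingLimit hc hζ (hs.trans hlo) hmid (hhi.trans ht)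
  simp only [mul_comm m] at hpieces
  exact tendsto_nhds_unique (hμ.tendsto_uniformSum_two_pow_mul_sewingLimit hc hζ hs hst ht hm)
    hpieces

theorem sewingLimit_add_gridPoint (hμ : AlmostAdditiveOn μ T c ζ) (hc : 0 ≤ c) (hζ : 1 < ζ)
    (hs : 0 ≤ s) (hst : s ≤ t) (ht : t ≤ T) {m k : ℕ} (hkm : k ≤ m) :
    sewingLimit μ s t
      = sewingLimit μ s (gridPoint s t m k) + sewingLimit μ (gridPoint s t m k) t := by
  obtain ⟨hsu, hut⟩ := gridPoint_mem_Icc (s := s) (t := t) hst hkm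
  rcases Nat.eq_zero_or_pos k with rfl | hk
  · rw [gridPoint_zero, hμ.sewingLimit_self hc hζ hs (hst.trans ht), zero_add]
  rcases hkm.eq_or_lt with rfl | hkm
  · rw [gridPoint_self hk.ne', hμ.sewingLimit_self hc hζ (hs.trans hst) ht, add_zero]
  rw [hμ.sewingLimit_eq_sum hc hζ hs hst ht (m := m) (by omega),
    hμ.sewingLimit_eq_sum hc hζ hs hsu (hut.trans ht) hk.ne',
    hμ.sewingLimit_eq_sum hc hζ (hs.trans hsu) hut ht (m := m - k) (by omega),
    ← Nat.add_sub_cancel' hkm.le, sum_range_add, Nat.add_sub_cancel' hkm.le]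
  simp only [gridPoint_gridPoint_left hk.ne', gridPoint_gridPoint_right hkm, add_assoc]

theorem continuousOn_sewingLimit (hμ : AlmostAdditiveOn μ T c ζ) (hc : 0 ≤ c) (hζ : 1 < ζ)
    (hμc : ContinuousOn (fun p : ℝ × ℝ => μ p.1 p.2) {p | 0 ≤ p.2 ∧ p.2 ≤ p.1 ∧ p.1 ≤ T})
    (hs : 0 ≤ s) : ContinuousOn (sewingLimit μ s) (Set.Icc s T) := by
  set r : ℝ := 2 ^ (1 - ζ)
  have hr : r < 1 := two_rpow_one_sub_lt_one hζ
  have hbound : Tendsto (fun n : ℕ => 2 * c * (T - s) ^ ζ / (1 - r) * r ^ n) atTop (𝓝 0) := by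
    simpa using (tendsto_pow_atTop_nhds_zero_of_lt_one (by positivity) hr).const_mul
      (2 * c * (T - s) ^ ζ / (1 - r))
  have hunif : TendstoUniformlyOn (fun n : ℕ => uniformSum μ (2 ^ n) s) (sewingLimit μ s)
      atTop (Set.Icc s T) := by
    refine Metric.tendstoUniformlyOn_iff.2 fun ε hε => ?_
    filter_upwards [hbound.eventually (gt_mem_nhds hε)] with n hn t ht
    rw [dist_comm, dist_eq_norm]
    refine (hμ.norm_uniformSum_sub_sewingLimit_le hc hζ hs ht.1 ht.2 n).trans_lt
      (lt_of_le_of_lt ?_ hn)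
    have hpow : (t - s) ^ ζ ≤ (T - s) ^ ζ :=
      Real.rpow_le_rpow (sub_nonneg.2 ht.1) (by linarith [ht.2]) (by linarith)
    have hr' : 0 < 1 - r := sub_pos.2 hr
    rw [div_mul_eq_mul_div]
    gcongr
  exact hunif.continuousOn (Frequently.of_forall fun n => continuousOn_uniformSum hμc hs _)

theorem norm_sewingLimit_sub_sub_le (hμ : AlmostAdditiveOn μ T c ζ) (hc : 0 ≤ c) (hζ : 1 < ζ)
    (hμc : ContinuousOn (fun p : ℝ × ℝ => μ p.1 p.2) {p | 0 ≤ p.2 ∧ p.2 ≤ p.1 ∧ p.1 ≤ T})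
    {a : ℝ} (ha : 0 ≤ a) (has : a ≤ s) (hst : s ≤ t) (ht : t ≤ T) :
    ‖sewingLimit μ a t - sewingLimit μ a s - μ t s‖ ≤ sewingConstant ζ * c * (t - s) ^ ζ := by
  have hpath : ContinuousOn (sewingLimit μ a) (Set.Icc a t) :=
    (hμ.continuousOn_sewingLimit hc hζ hμc ha).mono (Set.Icc_subset_Icc_right ht)
  have hμt : ContinuousOn (μ t) (Set.Icc a t) :=
    hμc.comp (f := fun u => (t, u)) (Continuous.continuousOn (by fun_prop))
      fun u hu => ⟨ha.trans hu.1, hu.2, ht⟩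
  refine le_of_le_gridPoint (f := fun u => ‖sewingLimit μ a t - sewingLimit μ a u - μ t u‖)
    (g := fun u => sewingConstant ζ * c * (t - u) ^ ζ)
    ((continuousOn_const.sub hpath).sub hμt).norm
    (Continuous.continuousOn (by fun_prop (disch := linarith))) (fun m k hkm => ?_) ⟨has, hst⟩
  obtain ⟨hau, hut⟩ := gridPoint_mem_Icc (s := a) (t := t) (has.trans hst) hkm
  rw [hμ.sewingLimit_add_gridPoint hc hζ ha (has.trans hst) ht hkm, add_sub_cancel_left,
    norm_sub_rev]
  exact hμ.norm_sub_sewingLimit_le hc hζ (ha.trans hau) hut ht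

end AlmostAdditiveOn

end Sewing

theorem eq_of_norm_sub_le_rpow {E : Type*} [NormedAddCommGroup E] {z : ℝ → E} {a b K ζ : ℝ}
    (hζ : 1 < ζ) (hz : ∀ s t, a ≤ s → s ≤ t → t ≤ b → ‖z t - z s‖ ≤ K * (t - s) ^ ζ)
    {t : ℝ} (ht : t ∈ Set.Icc a b) : z t = z a := by
  have hm : ∀ m : ℕ, m ≠ 0 → ‖z t - z a‖ ≤ K * (t - a) ^ ζ * (m : ℝ) ^ (1 - ζ) := by
    intro m hm
    have hstep : ∀ i ∈ range m, ‖z (gridPoint a t m (i + 1)) - z (gridPoint a t m i)‖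
        ≤ K * ((t - a) / m) ^ ζ := by
      intro i hi
      obtain ⟨hlo, hmid, hhi⟩ := gridPoint_bounds_of_lt ht.1 (mem_range.1 hi)
      simpa only [gridPoint_succ_sub] using hz _ _ hlo hmid (hhi.trans ht.2)
    calc ‖z t - z a‖
        = ‖∑ i ∈ range m, (z (gridPoint a t m (i + 1)) - z (gridPoint a t m i))‖ := by
          rw [sum_range_sub (fun i => z (gridPoint a t m i)), gridPoint_self hm, gridPoint_zero]
      _ ≤ m * (K * ((t - a) / m) ^ ζ) := by simpa using (norm_sum_le _ _).trans (sum_le_sum hstep)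
      _ = K * (t - a) ^ ζ * (m : ℝ) ^ (1 - ζ) := by
          rw [mul_left_comm, mul_div_rpow_eq (sub_nonneg.2 ht.1) (by positivity), mul_assoc]
  have hlim : Tendsto (fun m : ℕ => K * (t - a) ^ ζ * (m : ℝ) ^ (1 - ζ)) atTop (𝓝 0) := by
    have h := (tendsto_rpow_neg_atTop (by linarith : 0 < ζ - 1)).comp
      (tendsto_natCast_atTop_atTop (R := ℝ))
    simpa [Function.comp_def] using h.const_mul (K * (t - a) ^ ζ)
  have hle : ‖z t - z a‖ ≤ 0 :=
    ge_of_tendsto hlim ((eventually_ne_atTop 0).mono hm)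
  exact sub_eq_zero.1 (norm_le_zero_iff.1 hle)

theorem eq_of_norm_sub_sub_le {E : Type*} [NormedAddCommGroup E] {x y : ℝ → E}
    {μ : ℝ → ℝ → E} {a b K ζ : ℝ} (hζ : 1 < ζ)
    (hx : ∀ s t, a ≤ s → s ≤ t → t ≤ b → ‖x t - x s - μ t s‖ ≤ K * (t - s) ^ ζ)
    (hy : ∀ s t, a ≤ s → s ≤ t → t ≤ b → ‖y t - y s - μ t s‖ ≤ K * (t - s) ^ ζ)
    (ha : y a = x a) {t : ℝ} (ht : t ∈ Set.Icc a b) : y t = x t := by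
  have hdiff : ∀ s t, a ≤ s → s ≤ t → t ≤ b →
      ‖(y - x) t - (y - x) s‖ ≤ 2 * K * (t - s) ^ ζ := fun s t has hst htb =>
    calc ‖(y - x) t - (y - x) s‖ = ‖(y t - y s - μ t s) - (x t - x s - μ t s)‖ := by
          simp only [Pi.sub_apply]; congr 1; abel
      _ ≤ K * (t - s) ^ ζ + K * (t - s) ^ ζ :=
          (norm_sub_le _ _).trans (add_le_add (hy s t has hst htb) (hx s t has hst htb))
      _ = 2 * K * (t - s) ^ ζ := by ring
  simpa [ha, sub_eq_zero] using eq_of_norm_sub_le_rpow hζ hdiff ht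

/-- Sewing lemma (existence). For `ζ > 1` there is a constant `C`,
depending only on `ζ`, such that every continuous almost-additive two-index map
`μ` with defect bounded by `c₁|t-s|^ζ` is, up to order `C·c₁·|t-s|^ζ`, the
increment map of a path started at `0`, unique among such paths on `[0,T]`. -/
theorem sewing_existence (ζ : ℝ) (hζ : 1 < ζ) :
    ∃ C : ℝ, 0 < C ∧
      ∀ (E : Type) [NormedAddCommGroup E] [NormedSpace ℝ E] [CompleteSpace E]
        (T : ℝ), 0 < T →
        ∀ (μ : ℝ → ℝ → E) (c₁ : ℝ), 0 ≤ c₁ →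
        ContinuousOn (fun p : ℝ × ℝ => μ p.1 p.2)
          {p : ℝ × ℝ | 0 ≤ p.2 ∧ p.2 ≤ p.1 ∧ p.1 ≤ T} →
        (∀ s u t : ℝ, 0 ≤ s → s ≤ u → u ≤ t → t ≤ T →
          ‖μ t s - (μ t u + μ u s)‖ ≤ c₁ * (t - s) ^ ζ) →
        ∃ x : ℝ → E, x 0 = 0 ∧
          (∀ s t : ℝ, 0 ≤ s → s ≤ t → t ≤ T →
            ‖x t - x s - μ t s‖ ≤ C * c₁ * (t - s) ^ ζ) ∧
          ∀ y : ℝ → E, y 0 = 0 →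
            (∀ s t : ℝ, 0 ≤ s → s ≤ t → t ≤ T →
              ‖y t - y s - μ t s‖ ≤ C * c₁ * (t - s) ^ ζ) →
            ∀ t ∈ Set.Icc (0:ℝ) T, y t = x t := by
  refine ⟨sewingConstant ζ, sewingConstant_pos hζ, ?_⟩
  intro E _ _ _ T hT μ c₁ hc hμc (hμ : AlmostAdditiveOn μ T c₁ ζ)
  have hx : ∀ s t : ℝ, 0 ≤ s → s ≤ t → t ≤ T →
      ‖sewingLimit μ 0 t - sewingLimit μ 0 s - μ t s‖ ≤ sewingConstant ζ * c₁ * (t - s) ^ ζ :=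
    fun s t hs hst ht => hμ.norm_sewingLimit_sub_sub_le hc hζ hμc le_rfl hs hst ht
  have hx0 : sewingLimit μ 0 0 = 0 := hμ.sewingLimit_self hc hζ le_rfl hT.le
  exact ⟨sewingLimit μ 0, hx0, hx, fun y hy0 hy t ht =>
    eq_of_norm_sub_sub_le hζ hx hy (hy0.trans hx0.symm) ht⟩
end

section
/- Let F : C²-function from V to L(U,V) with bounded derivatives up to order 2, let X : [0,T] → U be α-Hölder with α ∈ (1/3,1/2], and let (Z, Z') be a V-valued path controlled by X. Then (F∘Z, (DF∘Z)·Z') — with Gubinelli derivative at time t given by u ↦ (D_{Z_t}F)(Z'_t u) ∈ L(U,V) — is an L(U,V)-valued path controlled by X, with remainder bound |F(Z_t) − F(Z_s) − (D_{Z_s}F)(Z'_s(X_t − X_s))| ≤ C|t−s|^{2α}, where C depends only on ‖F‖_{C²}, the controlled-path norm of (Z,Z'), ‖X‖_{α-Höl} and T. -/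
/-! A bound on `D²F` makes `DF` Lipschitz and gives the second-order Taylor estimate
`‖F b - F a - DF(a)(b - a)‖ ≤ M₂ ‖b - a‖²`. Writing `F(Z_t) - F(Z_s) - DF(Z_s)(Z'_s δX)` as the
Taylor error at `Z_s` plus `DF(Z_s)` applied to the remainder of `Z`, and using that a controlled
path is itself `α`-Hölder, both terms are `O(|t - s|^{2α})`. Likewise
`DF(Z_t) Z'_t - DF(Z_s) Z'_s = (DF(Z_t) - DF(Z_s)) Z'_t + DF(Z_s)(Z'_t - Z'_s)` is `O(|t - s|^α)`. -/

section SecondOrderBounds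

variable {E V W : Type*} [NormedAddCommGroup E] [NormedSpace ℝ E]
  [NormedAddCommGroup V] [NormedSpace ℝ V] [NormedAddCommGroup W] [NormedSpace ℝ W]
  {F : V → W} {M₁ M₂ : ℝ}

lemma norm_fderiv_sub_le (hF : ContDiff ℝ 2 F) (hM₂ : ∀ v, ‖fderiv ℝ (fderiv ℝ F) v‖ ≤ M₂)
    (a b : V) : ‖fderiv ℝ F b - fderiv ℝ F a‖ ≤ M₂ * ‖b - a‖ :=
  convex_univ.norm_image_sub_le_of_norm_fderiv_le
    (fun _ _ => ((hF.fderiv_right le_rfl).differentiable one_ne_zero).differentiableAt)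
    (fun v _ => hM₂ v) (Set.mem_univ a) (Set.mem_univ b)

lemma norm_image_sub_sub_fderiv_le (hF : ContDiff ℝ 2 F)
    (hM₂ : ∀ v, ‖fderiv ℝ (fderiv ℝ F) v‖ ≤ M₂) (a b : V) :
    ‖F b - F a - fderiv ℝ F a (b - a)‖ ≤ M₂ * ‖b - a‖ ^ 2 := by
  have hM₂₀ : 0 ≤ M₂ := (ContinuousLinearMap.opNorm_nonneg _).trans (hM₂ a)
  have hbound : ∀ v ∈ Metric.closedBall a ‖b - a‖,
      ‖fderiv ℝ F v - fderiv ℝ F a‖ ≤ M₂ * ‖b - a‖ := fun v hv =>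
    (norm_fderiv_sub_le hF hM₂ a v).trans
      (mul_le_mul_of_nonneg_left (mem_closedBall_iff_norm.1 hv) hM₂₀)
  calc ‖F b - F a - fderiv ℝ F a (b - a)‖ ≤ M₂ * ‖b - a‖ * ‖b - a‖ :=
        (convex_closedBall a _).norm_image_sub_le_of_norm_fderiv_le'
          (fun _ _ => (hF.differentiable two_ne_zero).differentiableAt) hbound
          (Metric.mem_closedBall_self (norm_nonneg _)) (mem_closedBall_iff_norm.2 le_rfl)
    _ = M₂ * ‖b - a‖ ^ 2 := by ring

lemma norm_image_sub_sub_fderiv_apply_le (hF : ContDiff ℝ 2 F) {a : V}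
    (hM₁ : ‖fderiv ℝ F a‖ ≤ M₁) (hM₂ : ∀ v, ‖fderiv ℝ (fderiv ℝ F) v‖ ≤ M₂) (b y : V) :
    ‖F b - F a - fderiv ℝ F a y‖ ≤ M₂ * ‖b - a‖ ^ 2 + M₁ * ‖b - a - y‖ := by
  have hsplit : F b - F a - fderiv ℝ F a y =
      (F b - F a - fderiv ℝ F a (b - a)) + fderiv ℝ F a (b - a - y) := by
    simp only [map_sub]; abel
  calc ‖F b - F a - fderiv ℝ F a y‖
      ≤ ‖F b - F a - fderiv ℝ F a (b - a)‖ + ‖fderiv ℝ F a (b - a - y)‖ :=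
        hsplit ▸ norm_add_le _ _
    _ ≤ M₂ * ‖b - a‖ ^ 2 + M₁ * ‖b - a - y‖ :=
        add_le_add (norm_image_sub_sub_fderiv_le hF hM₂ a b)
          ((ContinuousLinearMap.le_opNorm _ _).trans
            (mul_le_mul_of_nonneg_right hM₁ (norm_nonneg _)))

lemma norm_fderiv_comp_sub_fderiv_comp_le (hF : ContDiff ℝ 2 F) {a : V}
    (hM₁ : ‖fderiv ℝ F a‖ ≤ M₁) (hM₂ : ∀ v, ‖fderiv ℝ (fderiv ℝ F) v‖ ≤ M₂) (b : V)
    (A B : E →L[ℝ] V) :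
    ‖(fderiv ℝ F b).comp B - (fderiv ℝ F a).comp A‖ ≤ M₂ * ‖b - a‖ * ‖B‖ + M₁ * ‖B - A‖ := by
  have hsplit : (fderiv ℝ F b).comp B - (fderiv ℝ F a).comp A =
      (fderiv ℝ F b - fderiv ℝ F a).comp B + (fderiv ℝ F a).comp (B - A) := by
    rw [ContinuousLinearMap.sub_comp, ContinuousLinearMap.comp_sub, sub_add_sub_cancel]
  calc ‖(fderiv ℝ F b).comp B - (fderiv ℝ F a).comp A‖
      ≤ ‖fderiv ℝ F b - fderiv ℝ F a‖ * ‖B‖ + ‖fderiv ℝ F a‖ * ‖B - A‖ :=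
        hsplit ▸ (norm_add_le _ _).trans
          (add_le_add (ContinuousLinearMap.opNorm_comp_le _ _)
            (ContinuousLinearMap.opNorm_comp_le _ _))
    _ ≤ M₂ * ‖b - a‖ * ‖B‖ + M₁ * ‖B - A‖ := by
        gcongr
        exact norm_fderiv_sub_le hF hM₂ a b

end SecondOrderBounds

section ControlledPaths

lemma Real.rpow_two_mul {x : ℝ} (hx : 0 ≤ x) (y : ℝ) : x ^ (2 * y) = (x ^ y) ^ 2 := by
  rw [mul_comm, ← Real.rpow_mul_natCast hx, Nat.cast_ofNat]

lemma Real.rpow_two_mul_le {h T α : ℝ} (hh : 0 ≤ h) (hhT : h ≤ T) (hα : 0 ≤ α) :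
    h ^ (2 * α) ≤ T ^ α * h ^ α := by
  rw [Real.rpow_two_mul hh, sq]
  gcongr

variable {U V : Type*} [NormedAddCommGroup U] [NormedSpace ℝ U] [NormedAddCommGroup V] [NormedSpace ℝ V]
  {T α : ℝ} {X : ℝ → U} {Z : ℝ → V} {Z' : ℝ → U →L[ℝ] V} {CX KZ BZ' : ℝ}

lemma norm_sub_le_of_controlled (hα : 0 ≤ α) (hKZ : 0 ≤ KZ)
    (hX : ∀ s t : ℝ, 0 ≤ s → s ≤ t → t ≤ T → ‖X t - X s‖ ≤ CX * (t - s) ^ α)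
    (hBZ' : ∀ t ∈ Set.Icc (0:ℝ) T, ‖Z' t‖ ≤ BZ')
    (hR : ∀ s t : ℝ, 0 ≤ s → s ≤ t → t ≤ T →
      ‖Z t - Z s - Z' s (X t - X s)‖ ≤ KZ * (t - s) ^ (2*α))
    (s t : ℝ) (hs : 0 ≤ s) (hst : s ≤ t) (htT : t ≤ T) :
    ‖Z t - Z s‖ ≤ (BZ' * CX + KZ * T ^ α) * (t - s) ^ α := by
  have hBs := hBZ' s ⟨hs, hst.trans htT⟩
  have hRst := (hR s t hs hst htT).trans (mul_le_mul_of_nonneg_left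
    (Real.rpow_two_mul_le (sub_nonneg.2 hst) (show t - s ≤ T by linarith) hα) hKZ)
  calc ‖Z t - Z s‖ ≤ ‖Z' s‖ * ‖X t - X s‖ + ‖Z t - Z s - Z' s (X t - X s)‖ :=
        (norm_le_insert' _ _).trans (add_le_add_left ((Z' s).le_opNorm _) _)
    _ ≤ BZ' * (CX * (t - s) ^ α) + KZ * (T ^ α * (t - s) ^ α) := by
        gcongr
        · exact (norm_nonneg _).trans hBs
        · exact hX s t hs hst htT
    _ = (BZ' * CX + KZ * T ^ α) * (t - s) ^ α := by ring

end ControlledPaths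

theorem controlled_path_composition_C2_general
    (U V : Type*) [NormedAddCommGroup U] [NormedSpace ℝ U]
    [NormedAddCommGroup V] [NormedSpace ℝ V]
    (T α : ℝ) (hT : 0 < T) (hα : α ∈ Set.Ioc (1/3 : ℝ) (1/2 : ℝ))
    (F : V → U →L[ℝ] V) (hF : ContDiff ℝ 2 F)
    (M₁ M₂ : ℝ)
    (hM₁ : ∀ v : V, ‖fderiv ℝ F v‖ ≤ M₁)
    (hM₂ : ∀ v : V, @norm _ (ContinuousLinearMap.hasOpNorm (E := V) (F := V →L[ℝ] U →L[ℝ] V) (σ₁₂ := RingHom.id ℝ)) (fderiv ℝ (fderiv ℝ F) v) ≤ M₂)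
    (X : ℝ → U) (CX : ℝ)
    (hX : ∀ s t : ℝ, 0 ≤ s → s ≤ t → t ≤ T → ‖X t - X s‖ ≤ CX * (t - s) ^ α)
    (Z : ℝ → V) (Z' : ℝ → U →L[ℝ] V) (CZ' KZ BZ' : ℝ)
    (hZ' : ∀ s t : ℝ, 0 ≤ s → s ≤ t → t ≤ T → ‖Z' t - Z' s‖ ≤ CZ' * (t - s) ^ α)
    (hBZ' : ∀ t ∈ Set.Icc (0:ℝ) T, ‖Z' t‖ ≤ BZ')
    (hR : ∀ s t : ℝ, 0 ≤ s → s ≤ t → t ≤ T →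
      ‖Z t - Z s - Z' s (X t - X s)‖ ≤ KZ * (t - s) ^ (2*α)) :
    ∃ C : ℝ, 0 ≤ C ∧
      -- remainder bound for `(F∘Z, DF(Z)∘Z')`
      (∀ s t : ℝ, 0 ≤ s → s ≤ t → t ≤ T →
        ‖F (Z t) - F (Z s) - fderiv ℝ F (Z s) (Z' s (X t - X s))‖ ≤
          C * (t - s) ^ (2*α)) ∧
      -- the Gubinelli derivative `u ↦ (D_{Z_t}F)(Z'_t u)` is `α`-Hölder
      (∀ s t : ℝ, 0 ≤ s → s ≤ t → t ≤ T →
        ‖(fderiv ℝ F (Z t)).comp (Z' t) - (fderiv ℝ F (Z s)).comp (Z' s)‖ ≤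
          C * (t - s) ^ α) := by
  have hα₀ : 0 ≤ α := by linarith [hα.1]
  have hM₁₀ : 0 ≤ M₁ := (ContinuousLinearMap.opNorm_nonneg _).trans (hM₁ 0)
  have hM₂₀ : 0 ≤ M₂ := (ContinuousLinearMap.opNorm_nonneg _).trans (hM₂ 0)
  have hKZ : 0 ≤ KZ := nonneg_of_mul_nonneg_left ((norm_nonneg _).trans
    (hR 0 T le_rfl hT.le le_rfl)) (Real.rpow_pos_of_pos (sub_pos.2 hT) _)
  set L := BZ' * CX + KZ * T ^ α
  have hZ := norm_sub_le_of_controlled hα₀ hKZ hX hBZ' hR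
  refine ⟨max (M₂ * L ^ 2 + M₁ * KZ) (M₂ * L * BZ' + M₁ * CZ'),
    le_max_of_le_left (by positivity), fun s t hs hst htT => ?_, fun s t hs hst htT => ?_⟩
  · calc _ ≤ M₂ * ‖Z t - Z s‖ ^ 2 + M₁ * ‖Z t - Z s - Z' s (X t - X s)‖ :=
          norm_image_sub_sub_fderiv_apply_le hF (hM₁ _) hM₂ _ _
      _ ≤ M₂ * (L * (t - s) ^ α) ^ 2 + M₁ * (KZ * (t - s) ^ (2 * α)) := by
          gcongr
          exacts [hZ s t hs hst htT, hR s t hs hst htT]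
      _ = (M₂ * L ^ 2 + M₁ * KZ) * (t - s) ^ (2 * α) := by
          rw [Real.rpow_two_mul (sub_nonneg.2 hst)]; ring
      _ ≤ _ := by gcongr; exact le_max_left _ _
  · calc _ ≤ M₂ * ‖Z t - Z s‖ * ‖Z' t‖ + M₁ * ‖Z' t - Z' s‖ :=
          norm_fderiv_comp_sub_fderiv_comp_le hF (hM₁ _) hM₂ _ _ _
      _ ≤ M₂ * (L * (t - s) ^ α) * BZ' + M₁ * (CZ' * (t - s) ^ α) := by
          have hδZ := hZ s t hs hst htT
          gcongr
          · exact mul_nonneg hM₂₀ ((norm_nonneg _).trans hδZ)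
          exacts [hBZ' t ⟨hs.trans hst, htT⟩, hZ' s t hs hst htT]
      _ = (M₂ * L * BZ' + M₁ * CZ') * (t - s) ^ α := by ring
      _ ≤ _ := by gcongr; exact le_max_right _ _

/-- Stability of controlled paths under composition with a `C²`
map `F : V → L(U,V)` with bounded derivatives: `(F∘Z, DF(Z)·Z')` is an
`L(U,V)`-valued controlled path, with a quantitative `2α`-Hölder remainder
bound and an `α`-Hölder bound on the Gubinelli derivative part. -/
theorem controlled_path_composition_C2
    (U V : Type*) [NormedAddCommGroup U] [NormedSpace ℝ U] [CompleteSpace U]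
    [NormedAddCommGroup V] [NormedSpace ℝ V] [CompleteSpace V]
    (T α : ℝ) (hT : 0 < T) (hα : α ∈ Set.Ioc (1/3 : ℝ) (1/2 : ℝ))
    (F : V → U →L[ℝ] V) (hF : ContDiff ℝ 2 F)
    (M₀ M₁ M₂ : ℝ)
    (hM₀ : ∀ v : V, ‖F v‖ ≤ M₀)
    (hM₁ : ∀ v : V, ‖fderiv ℝ F v‖ ≤ M₁)
    (hM₂ : ∀ v : V, @norm _ (ContinuousLinearMap.hasOpNorm (E := V) (F := V →L[ℝ] U →L[ℝ] V) (σ₁₂ := RingHom.id ℝ)) (fderiv ℝ (fderiv ℝ F) v) ≤ M₂)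
    (X : ℝ → U) (CX : ℝ)
    (hX : ∀ s t : ℝ, 0 ≤ s → s ≤ t → t ≤ T → ‖X t - X s‖ ≤ CX * (t - s) ^ α)
    (Z : ℝ → V) (Z' : ℝ → U →L[ℝ] V) (CZ' KZ BZ' : ℝ)
    (hZ' : ∀ s t : ℝ, 0 ≤ s → s ≤ t → t ≤ T → ‖Z' t - Z' s‖ ≤ CZ' * (t - s) ^ α)
    (hBZ' : ∀ t ∈ Set.Icc (0:ℝ) T, ‖Z' t‖ ≤ BZ')
    (hR : ∀ s t : ℝ, 0 ≤ s → s ≤ t → t ≤ T →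
      ‖Z t - Z s - Z' s (X t - X s)‖ ≤ KZ * (t - s) ^ (2*α)) :
    ∃ C : ℝ, 0 ≤ C ∧
      -- remainder bound for `(F∘Z, DF(Z)∘Z')`
      (∀ s t : ℝ, 0 ≤ s → s ≤ t → t ≤ T →
        ‖F (Z t) - F (Z s) - fderiv ℝ F (Z s) (Z' s (X t - X s))‖ ≤
          C * (t - s) ^ (2*α)) ∧
      -- the Gubinelli derivative `u ↦ (D_{Z_t}F)(Z'_t u)` is `α`-Hölder
      (∀ s t : ℝ, 0 ≤ s → s ≤ t → t ≤ T →
        ‖(fderiv ℝ F (Z t)).comp (Z' t) - (fderiv ℝ F (Z s)).comp (Z' s)‖ ≤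
          C * (t - s) ^ α) :=
  controlled_path_composition_C2_general U V T α hT hα F hF M₁ M₂ hM₁ hM₂ X CX hX Z Z' CZ' KZ BZ'
    hZ' hBZ' hR
end

section
/- Bilinearity of the Young integral: under the hypotheses α + β > 1, the map (x, y) ↦ ∫₀^T x dy (the Young integral defined via the sewing lemma) is bilinear in (x, y) and satisfies the bound |∫₀^T x dy − x_0(y_T − y_0)| ≤ C‖x‖_{α-Höl}‖y‖_{β-Höl}T^{α+β}, where C depends only on α + β. In particular, the Young integration map is continuous from (α-Hölder paths) × (β-Hölder paths) to V. -/
/-!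
The Young integral is the limit of Riemann sums along dyadic uniform partitions. Replacing the
germ `x_s (y_t - y_s)` by the Riemann sum over `m` equal pieces of `[s, t]` adds `m` terms
`(x_u - x_s)(y_v - y_u)`, hence costs at most `m Cx Cy (t - s)^(α+β)`. So passing from `2^j` to
`2^(j+1)` pieces of `[a, b]` moves the sum by at most `2 Cx Cy (b - a)^(α+β) r^j`, where
`r = 2^(1-α-β) < 1`: the sums converge, and their limit lies within
`2 (1 - r)⁻¹ Cx Cy (b - a)^(α+β)` of the germ. Additivity `∫_a^b + ∫_b^c = ∫_a^c` holds when `b`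
is a grid point of `[a, c]`, where uniform partitions split exactly; it extends to every `b`
because the integral, a uniform limit of Riemann sums, is continuous in both endpoints.
Linearity in `x` and in `y` is inherited from the Riemann sums.
-/

def HolOn {E : Type*} [NormedAddCommGroup E] (T γ : ℝ) (f : ℝ → E) : Prop :=
  ∃ c : ℝ, 0 ≤ c ∧ ∀ s t : ℝ, 0 ≤ s → s ≤ t → t ≤ T → ‖f t - f s‖ ≤ c * (t - s) ^ γ

open Filter Finset Set Topology

lemma Finset.sum_range_mul {M : Type*} [AddCommMonoid M] (f : ℕ → M) (n m : ℕ) :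
    ∑ i ∈ range (n * m), f i = ∑ i ∈ range n, ∑ l ∈ range m, f (i * m + l) := by
  induction n with
  | zero => simp
  | succ n ih => rw [add_one_mul, sum_range_add, ih, sum_range_succ]

noncomputable section

namespace Young

def gridPt (k : ℕ) (a b : ℝ) (i : ℕ) : ℝ := a + i * ((b - a) / k)

@[simp] lemma gridPt_zero (k : ℕ) (a b : ℝ) : gridPt k a b 0 = a := by simp [gridPt]

lemma gridPt_self {k : ℕ} (hk : k ≠ 0) (a b : ℝ) : gridPt k a b k = b := by
  have : (k : ℝ) ≠ 0 := Nat.cast_ne_zero.2 hk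
  simp only [gridPt]
  field_simp
  ring

lemma gridPt_succ_sub (k : ℕ) (a b : ℝ) (i : ℕ) :
    gridPt k a b (i + 1) - gridPt k a b i = (b - a) / k := by
  simp only [gridPt]; push_cast; ring

lemma gridPt_mono (k : ℕ) {a b : ℝ} (hab : a ≤ b) : Monotone (gridPt k a b) := fun i j hij => by
  have : 0 ≤ (b - a) / k := div_nonneg (sub_nonneg.2 hab) k.cast_nonneg
  unfold gridPt; gcongr

lemma gridPt_mem_Icc {k : ℕ} {a b : ℝ} (hab : a ≤ b) {i : ℕ} (hi : i ≤ k) :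
    gridPt k a b i ∈ Icc a b := by
  rcases eq_or_ne k 0 with rfl | hk
  · simpa [gridPt] using hab
  · have h₀ := gridPt_mono k hab i.zero_le
    have h₁ := gridPt_mono k hab hi
    rw [gridPt_zero] at h₀
    rw [gridPt_self hk] at h₁
    exact ⟨h₀, h₁⟩

lemma gridPt_mul_add {m : ℕ} (hm : m ≠ 0) (n : ℕ) (a b : ℝ) (i l : ℕ) :
    gridPt (n * m) a b (i * m + l) = gridPt m (gridPt n a b i) (gridPt n a b (i + 1)) l := by
  rcases eq_or_ne n 0 with rfl | hn
  · simp [gridPt]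
  simp only [gridPt]
  push_cast
  field_simp
  ring

lemma gridPt_add_left {p : ℕ} (hp : p ≠ 0) (d : ℕ) (a c : ℝ) (i : ℕ) :
    gridPt (p + d) a c i = gridPt p a (gridPt (p + d) a c p) i := by
  simp only [gridPt]
  push_cast
  field_simp
  ring

lemma gridPt_add_right (p : ℕ) {d : ℕ} (hd : d ≠ 0) (a c : ℝ) (i : ℕ) :
    gridPt (p + d) a c (p + i) = gridPt d (gridPt (p + d) a c p) c i := by
  have : (p : ℝ) + d ≠ 0 := by positivity
  simp only [gridPt]
  push_cast
  field_simp
  ring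

def simplex (T : ℝ) : Set (ℝ × ℝ) := {p | 0 ≤ p.1 ∧ p.1 ≤ p.2 ∧ p.2 ≤ T}

lemma mem_simplex {T a b : ℝ} : (a, b) ∈ simplex T ↔ 0 ≤ a ∧ a ≤ b ∧ b ≤ T := Iff.rfl

lemma continuousOn_comp_gridPt {E : Type*} [TopologicalSpace E] {T : ℝ} {f : ℝ → E}
    (hf : ContinuousOn f (Icc 0 T)) {k i : ℕ} (hi : i ≤ k) :
    ContinuousOn (fun p : ℝ × ℝ => f (gridPt k p.1 p.2 i)) (simplex T) :=
  hf.comp (by unfold gridPt; fun_prop) fun _ ⟨h0, hab, hbT⟩ =>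
    ⟨h0.trans (gridPt_mem_Icc hab hi).1, (gridPt_mem_Icc hab hi).2.trans hbT⟩

lemma tendsto_gridPt_floor (a c : ℝ) {lam : ℝ} (hlam : 0 ≤ lam) :
    Tendsto (fun n : ℕ => gridPt n a c ⌊lam * n⌋₊) atTop (𝓝 (a + lam * (c - a))) := by
  refine (((tendsto_nat_floor_mul_div_atTop hlam).comp tendsto_natCast_atTop_atTop).mul_const
    (c - a) |>.const_add a).congr fun n => ?_
  simp only [gridPt, Function.comp_apply]
  ring

structure HolderBound {E : Type*} [NormedAddCommGroup E] (T γ c : ℝ) (f : ℝ → E) : Prop where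
  exponent_pos : 0 < γ
  const_nonneg : 0 ≤ c
  norm_sub_le : ∀ s t : ℝ, 0 ≤ s → s ≤ t → t ≤ T → ‖f t - f s‖ ≤ c * (t - s) ^ γ

namespace HolderBound

variable {E : Type*} [NormedAddCommGroup E] {T γ c : ℝ} {f : ℝ → E}

lemma norm_sub_le_of_le (hf : HolderBound T γ c f) {a b s t : ℝ} (h0 : 0 ≤ a) (has : a ≤ s)
    (hst : s ≤ t) (htb : t ≤ b) (hbT : b ≤ T) : ‖f t - f s‖ ≤ c * (b - a) ^ γ :=
  (hf.norm_sub_le s t (h0.trans has) hst (htb.trans hbT)).trans <|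
    mul_le_mul_of_nonneg_left
      (Real.rpow_le_rpow (sub_nonneg.2 hst) (by linarith) hf.exponent_pos.le) hf.const_nonneg

lemma norm_sub_le_abs (hf : HolderBound T γ c f) {s t : ℝ} (hs : s ∈ Icc 0 T) (ht : t ∈ Icc 0 T) :
    ‖f t - f s‖ ≤ c * |t - s| ^ γ := by
  rcases le_total s t with hst | hts
  · simpa [abs_of_nonneg (sub_nonneg.2 hst)] using hf.norm_sub_le s t hs.1 hst ht.2
  · rw [norm_sub_rev, abs_sub_comm, abs_of_nonneg (sub_nonneg.2 hts)]
    exact hf.norm_sub_le t s ht.1 hts hs.2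

lemma continuousOn (hf : HolderBound T γ c f) : ContinuousOn f (Icc 0 T) := by
  intro s hs
  rw [ContinuousWithinAt, tendsto_iff_norm_sub_tendsto_zero]
  have hbound : Continuous fun t : ℝ => c * |t - s| ^ γ := by
    have := Real.continuous_rpow_const hf.exponent_pos.le
    fun_prop
  have hlim : Tendsto (fun t : ℝ => c * |t - s| ^ γ) (𝓝[Icc 0 T] s) (𝓝 0) := by
    simpa [Real.zero_rpow hf.exponent_pos.ne'] using
      (hbound.continuousWithinAt (s := Icc 0 T) (x := s)).tendsto
  refine squeeze_zero' (Eventually.of_forall fun _ => norm_nonneg _) ?_ hlim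
  filter_upwards [self_mem_nhdsWithin] with t ht
  exact hf.norm_sub_le_abs hs ht

end HolderBound

lemma two_pow_mul_div_rpow {d : ℝ} (hd : 0 ≤ d) (θ : ℝ) (j : ℕ) :
    (2 : ℝ) ^ j * (d / 2 ^ j) ^ θ = d ^ θ * ((2 : ℝ) ^ (1 - θ)) ^ j := by
  have h₁ : ((2 : ℝ) ^ j) ^ θ = 2 ^ ((j : ℝ) * θ) := by
    rw [← Real.rpow_natCast, ← Real.rpow_mul zero_le_two]
  have h₂ : ((2 : ℝ) ^ (1 - θ)) ^ j = 2 ^ ((1 - θ) * j) := by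
    rw [← Real.rpow_natCast, ← Real.rpow_mul zero_le_two]
  rw [Real.div_rpow hd (by positivity), h₁, h₂, ← Real.rpow_natCast 2 j, mul_div_left_comm,
    ← Real.rpow_sub two_pos]
  ring_nf

lemma two_rpow_one_sub_lt_one {θ : ℝ} (hθ : 1 < θ) : (2 : ℝ) ^ (1 - θ) < 1 :=
  Real.rpow_lt_one_of_one_lt_of_neg one_lt_two (by linarith)

variable {U V : Type*} [NormedAddCommGroup U] [NormedSpace ℝ U]
  [NormedAddCommGroup V] [NormedSpace ℝ V]

/-- The germ `μ_{st} = x_s (y_t - y_s)` of the Young integral. -/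
def germ (x : ℝ → U →L[ℝ] V) (y : ℝ → U) (s t : ℝ) : V := x s (y t - y s)

def riemannSum (x : ℝ → U →L[ℝ] V) (y : ℝ → U) (k : ℕ) (a b : ℝ) : V :=
  ∑ i ∈ range k, germ x y (gridPt k a b i) (gridPt k a b (i + 1))

section RiemannSum

variable (x : ℝ → U →L[ℝ] V) (y : ℝ → U)

lemma riemannSum_one (a b : ℝ) : riemannSum x y 1 a b = germ x y a b := by
  simp [riemannSum, gridPt]

lemma riemannSum_self (k : ℕ) (a : ℝ) : riemannSum x y k a a = 0 := by
  simp [riemannSum, germ, gridPt]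

lemma riemannSum_mul (n m : ℕ) (a b : ℝ) :
    riemannSum x y (n * m) a b =
      ∑ i ∈ range n, riemannSum x y m (gridPt n a b i) (gridPt n a b (i + 1)) := by
  rw [riemannSum, sum_range_mul]
  refine sum_congr rfl fun i _ => sum_congr rfl fun l hl => ?_
  have hm : m ≠ 0 := by rintro rfl; simp at hl
  rw [add_assoc, gridPt_mul_add hm, gridPt_mul_add hm]

lemma riemannSum_add_split (p d : ℕ) (a c : ℝ) :
    riemannSum x y (p + d) a c =
      riemannSum x y p a (gridPt (p + d) a c p) + riemannSum x y d (gridPt (p + d) a c p) c := by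
  rw [riemannSum, sum_range_add]
  congr 1
  · refine sum_congr rfl fun i hi => ?_
    have hp : p ≠ 0 := by rintro rfl; simp at hi
    rw [gridPt_add_left hp d a c i, gridPt_add_left hp d a c (i + 1)]
  · refine sum_congr rfl fun i hi => ?_
    have hd : d ≠ 0 := by rintro rfl; simp at hi
    rw [add_assoc, gridPt_add_right p hd, gridPt_add_right p hd]

lemma riemannSum_add_left (x₁ x₂ : ℝ → U →L[ℝ] V) (k : ℕ) (a b : ℝ) :
    riemannSum (x₁ + x₂) y k a b = riemannSum x₁ y k a b + riemannSum x₂ y k a b := by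
  simp [riemannSum, germ, sum_add_distrib]

lemma riemannSum_smul_left (c : ℝ) (k : ℕ) (a b : ℝ) :
    riemannSum (c • x) y k a b = c • riemannSum x y k a b := by
  simp only [riemannSum, germ, smul_sum, Pi.smul_apply, smul_apply]

lemma riemannSum_add_right (y₁ y₂ : ℝ → U) (k : ℕ) (a b : ℝ) :
    riemannSum x (y₁ + y₂) k a b = riemannSum x y₁ k a b + riemannSum x y₂ k a b := by
  simp [riemannSum, germ, sum_add_distrib, add_sub_add_comm]

lemma riemannSum_smul_right (c : ℝ) (k : ℕ) (a b : ℝ) :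
    riemannSum x (c • y) k a b = c • riemannSum x y k a b := by
  simp only [riemannSum, germ, smul_sum, Pi.smul_apply, ← smul_sub, map_smul]

end RiemannSum

variable {α β T Cx Cy : ℝ} {x : ℝ → U →L[ℝ] V} {y : ℝ → U}

lemma norm_sub_apply_sub_le (hx : HolderBound T α Cx x) (hy : HolderBound T β Cy y)
    {a b s s' t t' : ℝ} (h0 : 0 ≤ a) (hbT : b ≤ T) (hs : a ≤ s) (hss' : s ≤ s') (hs' : s' ≤ b)
    (ht : a ≤ t) (htt' : t ≤ t') (ht' : t' ≤ b) :
    ‖(x s' - x s) (y t' - y t)‖ ≤ Cx * Cy * (b - a) ^ (α + β) := by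
  have hab : 0 ≤ b - a := by linarith
  calc ‖(x s' - x s) (y t' - y t)‖ ≤ ‖x s' - x s‖ * ‖y t' - y t‖ :=
        (x s' - x s).le_opNorm _
    _ ≤ (Cx * (b - a) ^ α) * (Cy * (b - a) ^ β) :=
        mul_le_mul (hx.norm_sub_le_of_le h0 hs hss' hs' hbT)
          (hy.norm_sub_le_of_le h0 ht htt' ht' hbT) (norm_nonneg _)
          (mul_nonneg hx.const_nonneg (Real.rpow_nonneg hab _))
    _ = Cx * Cy * (b - a) ^ (α + β) := by
        rw [Real.rpow_add' hab (by linarith [hx.exponent_pos, hy.exponent_pos])]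
        ring

lemma norm_riemannSum_sub_germ_le (hx : HolderBound T α Cx x) (hy : HolderBound T β Cy y)
    {k : ℕ} (hk : k ≠ 0) {a b : ℝ} (h0 : 0 ≤ a) (hab : a ≤ b) (hbT : b ≤ T) :
    ‖riemannSum x y k a b - germ x y a b‖ ≤ k * (Cx * Cy * (b - a) ^ (α + β)) := by
  have hgerm : germ x y a b =
      ∑ i ∈ range k, x a (y (gridPt k a b (i + 1)) - y (gridPt k a b i)) := by
    rw [← map_sum, sum_range_sub (fun i => y (gridPt k a b i)), gridPt_self hk, gridPt_zero, germ]
  rw [hgerm, riemannSum, ← sum_sub_distrib]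
  refine (norm_sum_le _ _).trans <|
    (sum_le_card_nsmul _ _ (Cx * Cy * (b - a) ^ (α + β)) fun i hi => ?_).trans_eq (by simp)
  have hi := mem_range.1 hi
  obtain ⟨hati, hitb⟩ := gridPt_mem_Icc hab hi.le
  rw [germ, ← sub_apply]
  exact norm_sub_apply_sub_le hx hy h0 hbT le_rfl hati hitb hati (gridPt_mono k hab i.le_succ)
    (gridPt_mem_Icc hab hi).2

lemma norm_riemannSum_refine_sub_le (hx : HolderBound T α Cx x) (hy : HolderBound T β Cy y)
    {m : ℕ} (hm : m ≠ 0) {a b : ℝ} (h0 : 0 ≤ a) (hab : a ≤ b) (hbT : b ≤ T) (j : ℕ) :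
    ‖riemannSum x y (2 ^ j * m) a b - riemannSum x y (2 ^ j) a b‖ ≤
      m * (Cx * Cy * (b - a) ^ (α + β)) * ((2 : ℝ) ^ (1 - (α + β))) ^ j := by
  set t := gridPt (2 ^ j) a b
  have hmesh : ∀ i, t (i + 1) - t i = (b - a) / 2 ^ j := fun i => by
    simp [t, gridPt_succ_sub]
  calc ‖riemannSum x y (2 ^ j * m) a b - riemannSum x y (2 ^ j) a b‖
      = ‖∑ i ∈ range (2 ^ j),
          (riemannSum x y m (t i) (t (i + 1)) - germ x y (t i) (t (i + 1)))‖ := by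
        rw [riemannSum_mul, sum_sub_distrib]; rfl
    _ ≤ ∑ i ∈ range (2 ^ j), m * (Cx * Cy * ((b - a) / 2 ^ j) ^ (α + β)) := by
        refine (norm_sum_le _ _).trans (sum_le_sum fun i hi => ?_)
        have hi := mem_range.1 hi
        obtain ⟨hati, -⟩ := gridPt_mem_Icc hab hi.le
        rw [← hmesh i]
        exact norm_riemannSum_sub_germ_le hx hy hm (h0.trans hati) (gridPt_mono _ hab i.le_succ)
          ((gridPt_mem_Icc hab hi).2.trans hbT)
    _ = m * (Cx * Cy * (b - a) ^ (α + β)) * ((2 : ℝ) ^ (1 - (α + β))) ^ j := by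
        rw [sum_const, card_range, nsmul_eq_mul, Nat.cast_pow, Nat.cast_ofNat]
        linear_combination (m * (Cx * Cy)) * two_pow_mul_div_rpow (sub_nonneg.2 hab) (α + β) j

lemma dist_riemannSum_two_pow_succ_le (hx : HolderBound T α Cx x) (hy : HolderBound T β Cy y)
    {a b : ℝ} (h0 : 0 ≤ a) (hab : a ≤ b) (hbT : b ≤ T) (j : ℕ) :
    dist (riemannSum x y (2 ^ j) a b) (riemannSum x y (2 ^ (j + 1)) a b) ≤
      2 * (Cx * Cy * (b - a) ^ (α + β)) * ((2 : ℝ) ^ (1 - (α + β))) ^ j := by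
  rw [dist_comm, dist_eq_norm, pow_succ]
  exact_mod_cast norm_riemannSum_refine_sub_le hx hy two_ne_zero h0 hab hbT j

lemma continuousOn_riemannSum (hx : ContinuousOn x (Icc 0 T)) (hy : ContinuousOn y (Icc 0 T))
    (k : ℕ) : ContinuousOn (fun p : ℝ × ℝ => riemannSum x y k p.1 p.2) (simplex T) :=
  continuousOn_finsetSum _ fun i hi => by
    have hi := mem_range.1 hi
    exact (continuousOn_comp_gridPt hx hi.le).clm_apply
      ((continuousOn_comp_gridPt hy hi).sub (continuousOn_comp_gridPt hy hi.le))

def youngIntegral (x : ℝ → U →L[ℝ] V) (y : ℝ → U) (a b : ℝ) : V :=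
  limUnder atTop fun j : ℕ => riemannSum x y (2 ^ j) a b

def youngConst (θ : ℝ) : ℝ := 2 / (1 - 2 ^ (1 - θ))

lemma youngConst_pos {θ : ℝ} (hθ : 1 < θ) : 0 < youngConst θ :=
  div_pos two_pos (sub_pos.2 (two_rpow_one_sub_lt_one hθ))

lemma youngIntegral_eq_of_tendsto {a b : ℝ} {L : V}
    (h : Tendsto (fun j : ℕ => riemannSum x y (2 ^ j) a b) atTop (𝓝 L)) :
    youngIntegral x y a b = L :=
  h.limUnder_eq

lemma youngIntegral_self (a : ℝ) : youngIntegral x y a a = 0 :=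
  youngIntegral_eq_of_tendsto <| by simp only [riemannSum_self, tendsto_const_nhds]

variable [CompleteSpace V]

lemma tendsto_riemannSum_youngIntegral (hx : HolderBound T α Cx x) (hy : HolderBound T β Cy y)
    (hθ : 1 < α + β) {a b : ℝ} (h0 : 0 ≤ a) (hab : a ≤ b) (hbT : b ≤ T) :
    Tendsto (fun j : ℕ => riemannSum x y (2 ^ j) a b) atTop (𝓝 (youngIntegral x y a b)) :=
  (cauchySeq_of_le_geometric _ _ (two_rpow_one_sub_lt_one hθ)
    (dist_riemannSum_two_pow_succ_le hx hy h0 hab hbT)).tendsto_limUnder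

lemma dist_riemannSum_youngIntegral_le (hx : HolderBound T α Cx x) (hy : HolderBound T β Cy y)
    (hθ : 1 < α + β) {a b : ℝ} (h0 : 0 ≤ a) (hab : a ≤ b) (hbT : b ≤ T) (j : ℕ) :
    dist (riemannSum x y (2 ^ j) a b) (youngIntegral x y a b) ≤
      youngConst (α + β) * Cx * Cy * (b - a) ^ (α + β) * ((2 : ℝ) ^ (1 - (α + β))) ^ j := by
  refine (dist_le_of_le_geometric_of_tendsto _ _ (two_rpow_one_sub_lt_one hθ)
    (dist_riemannSum_two_pow_succ_le hx hy h0 hab hbT)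
    (tendsto_riemannSum_youngIntegral hx hy hθ h0 hab hbT) j).trans_eq ?_
  rw [youngConst]
  ring

lemma norm_youngIntegral_sub_germ_le (hx : HolderBound T α Cx x) (hy : HolderBound T β Cy y)
    (hθ : 1 < α + β) {a b : ℝ} (h0 : 0 ≤ a) (hab : a ≤ b) (hbT : b ≤ T) :
    ‖youngIntegral x y a b - germ x y a b‖ ≤ youngConst (α + β) * Cx * Cy * (b - a) ^ (α + β) := by
  simpa [riemannSum_one, dist_eq_norm, norm_sub_rev] using
    dist_riemannSum_youngIntegral_le hx hy hθ h0 hab hbT 0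

lemma tendsto_riemannSum_mul_two_pow (hx : HolderBound T α Cx x) (hy : HolderBound T β Cy y)
    (hθ : 1 < α + β) {a b : ℝ} (h0 : 0 ≤ a) (hab : a ≤ b) (hbT : b ≤ T) {k : ℕ} (hk : k ≠ 0) :
    Tendsto (fun j : ℕ => riemannSum x y (k * 2 ^ j) a b) atTop (𝓝 (youngIntegral x y a b)) := by
  have hrefine : Tendsto (fun j : ℕ => riemannSum x y (k * 2 ^ j) a b - riemannSum x y (2 ^ j) a b)
      atTop (𝓝 0) := by
    refine squeeze_zero_norm (fun j => ?_) <| by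
      simpa using (tendsto_pow_atTop_nhds_zero_of_lt_one (by positivity)
        (two_rpow_one_sub_lt_one hθ)).const_mul (k * (Cx * Cy * (b - a) ^ (α + β)))
    rw [mul_comm]
    exact norm_riemannSum_refine_sub_le hx hy hk h0 hab hbT j
  simpa using hrefine.add (tendsto_riemannSum_youngIntegral hx hy hθ h0 hab hbT)

lemma youngIntegral_add_gridPt (hx : HolderBound T α Cx x) (hy : HolderBound T β Cy y)
    (hθ : 1 < α + β) {a c : ℝ} (h0 : 0 ≤ a) (hac : a ≤ c) (hcT : c ≤ T) {p q : ℕ} (hpq : p ≤ q) :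
    youngIntegral x y a (gridPt q a c p) + youngIntegral x y (gridPt q a c p) c =
      youngIntegral x y a c := by
  obtain ⟨d, rfl⟩ := Nat.exists_eq_add_of_le hpq
  rcases eq_or_ne p 0 with rfl | hp
  · simp [youngIntegral_self]
  rcases eq_or_ne d 0 with rfl | hd
  · simp [gridPt_self hp, youngIntegral_self]
  set b := gridPt (p + d) a c p
  obtain ⟨hab, hbc⟩ : b ∈ Icc a c := gridPt_mem_Icc hac hpq
  have hsplit : ∀ j : ℕ, riemannSum x y ((p + d) * 2 ^ j) a c =
      riemannSum x y (p * 2 ^ j) a b + riemannSum x y (d * 2 ^ j) b c := fun j => by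
    have hb : gridPt ((p + d) * 2 ^ j) a c (p * 2 ^ j) = b := by
      simpa using gridPt_mul_add (pow_ne_zero j two_ne_zero) (p + d) a c p 0
    rw [← hb, add_mul]
    exact riemannSum_add_split x y _ _ a c
  have hlim := (tendsto_riemannSum_mul_two_pow hx hy hθ h0 hab (hbc.trans hcT) hp).add
    (tendsto_riemannSum_mul_two_pow hx hy hθ (h0.trans hab) hbc hcT hd)
  simp_rw [← hsplit] at hlim
  exact tendsto_nhds_unique hlim (tendsto_riemannSum_mul_two_pow hx hy hθ h0 hac hcT (by omega))

lemma continuousOn_youngIntegral (hx : HolderBound T α Cx x) (hy : HolderBound T β Cy y)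
    (hθ : 1 < α + β) :
    ContinuousOn (fun p : ℝ × ℝ => youngIntegral x y p.1 p.2) (simplex T) := by
  refine TendstoUniformlyOn.continuousOn (p := atTop)
    (F := fun (j : ℕ) (p : ℝ × ℝ) => riemannSum x y (2 ^ j) p.1 p.2) ?_
    (Frequently.of_forall fun j => continuousOn_riemannSum hx.continuousOn hy.continuousOn (2 ^ j))
  have hr := two_rpow_one_sub_lt_one hθ
  have hlim : Tendsto (fun j : ℕ => youngConst (α + β) * Cx * Cy * T ^ (α + β) *
      ((2 : ℝ) ^ (1 - (α + β))) ^ j) atTop (𝓝 0) := by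
    simpa using (tendsto_pow_atTop_nhds_zero_of_lt_one (by positivity) hr).const_mul
      (youngConst (α + β) * Cx * Cy * T ^ (α + β))
  rw [Metric.tendstoUniformlyOn_iff]
  intro ε hε
  filter_upwards [hlim.eventually (gt_mem_nhds hε)] with j hj p ⟨h0, hab, hbT⟩
  rw [dist_comm]
  refine (dist_riemannSum_youngIntegral_le hx hy hθ h0 hab hbT j).trans_lt (lt_of_le_of_lt ?_ hj)
  have := youngConst_pos hθ
  have := hx.const_nonneg
  have := hy.const_nonneg
  gcongr
  linarith

lemma youngIntegral_add (hx : HolderBound T α Cx x) (hy : HolderBound T β Cy y)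
    (hθ : 1 < α + β) {a b c : ℝ} (h0 : 0 ≤ a) (hab : a ≤ b) (hbc : b ≤ c) (hcT : c ≤ T) :
    youngIntegral x y a b + youngIntegral x y b c = youngIntegral x y a c := by
  rcases (hab.trans hbc).eq_or_lt with rfl | hac
  · obtain rfl := le_antisymm hbc hab
    simp [youngIntegral_self]
  have hca : 0 < c - a := sub_pos.2 hac
  obtain ⟨lam, hlam0, hlam1, rfl⟩ : ∃ lam : ℝ, 0 ≤ lam ∧ lam ≤ 1 ∧ b = a + lam * (c - a) :=
    ⟨(b - a) / (c - a), div_nonneg (sub_nonneg.2 hab) hca.le, (div_le_one hca).2 (by linarith),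
      by rw [div_mul_cancel₀ _ hca.ne']; ring⟩
  have hfloor : ∀ n : ℕ, ⌊lam * n⌋₊ ≤ n := fun n =>
    Nat.floor_le_of_le (mul_le_of_le_one_left n.cast_nonneg hlam1)
  have hmem : ∀ n : ℕ, gridPt n a c ⌊lam * n⌋₊ ∈ Icc a c := fun n =>
    gridPt_mem_Icc hac.le (hfloor n)
  have hu := tendsto_gridPt_floor a c hlam0
  have hcont := continuousOn_youngIntegral hx hy hθ
  have hleft := (hcont _ (mem_simplex.2 ⟨h0, hab, hbc.trans hcT⟩)).tendsto.comp <|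
    tendsto_nhdsWithin_iff.2 ⟨tendsto_const_nhds.prodMk_nhds hu,
      Eventually.of_forall fun n => mem_simplex.2 ⟨h0, (hmem n).1, (hmem n).2.trans hcT⟩⟩
  have hright := (hcont _ (mem_simplex.2 ⟨h0.trans hab, hbc, hcT⟩)).tendsto.comp <|
    tendsto_nhdsWithin_iff.2 ⟨hu.prodMk_nhds tendsto_const_nhds,
      Eventually.of_forall fun n => mem_simplex.2 ⟨h0.trans (hmem n).1, (hmem n).2, hcT⟩⟩
  refine tendsto_nhds_unique (hleft.add hright) ?_
  simp only [Function.comp_def, youngIntegral_add_gridPt hx hy hθ h0 hac.le hcT (hfloor _),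
    tendsto_const_nhds]

lemma youngIntegral_add_left {x₁ x₂ : ℝ → U →L[ℝ] V} {C₁ C₂ : ℝ}
    (hx₁ : HolderBound T α C₁ x₁) (hx₂ : HolderBound T α C₂ x₂) (hy : HolderBound T β Cy y)
    (hθ : 1 < α + β) {a b : ℝ} (h0 : 0 ≤ a) (hab : a ≤ b) (hbT : b ≤ T) :
    youngIntegral (x₁ + x₂) y a b = youngIntegral x₁ y a b + youngIntegral x₂ y a b :=
  youngIntegral_eq_of_tendsto <| by
    simpa only [riemannSum_add_left] using
      (tendsto_riemannSum_youngIntegral hx₁ hy hθ h0 hab hbT).add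
        (tendsto_riemannSum_youngIntegral hx₂ hy hθ h0 hab hbT)

lemma youngIntegral_smul_left (c : ℝ)
    (hx : HolderBound T α Cx x) (hy : HolderBound T β Cy y)
    (hθ : 1 < α + β) {a b : ℝ} (h0 : 0 ≤ a) (hab : a ≤ b) (hbT : b ≤ T) :
    youngIntegral (c • x) y a b = c • youngIntegral x y a b :=
  youngIntegral_eq_of_tendsto <| by
    simpa only [riemannSum_smul_left] using
      (tendsto_riemannSum_youngIntegral hx hy hθ h0 hab hbT).const_smul c

lemma youngIntegral_add_right {y₁ y₂ : ℝ → U} {C₁ C₂ : ℝ}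
    (hx : HolderBound T α Cx x) (hy₁ : HolderBound T β C₁ y₁) (hy₂ : HolderBound T β C₂ y₂)
    (hθ : 1 < α + β) {a b : ℝ} (h0 : 0 ≤ a) (hab : a ≤ b) (hbT : b ≤ T) :
    youngIntegral x (y₁ + y₂) a b = youngIntegral x y₁ a b + youngIntegral x y₂ a b :=
  youngIntegral_eq_of_tendsto <| by
    simpa only [riemannSum_add_right] using
      (tendsto_riemannSum_youngIntegral hx hy₁ hθ h0 hab hbT).add
        (tendsto_riemannSum_youngIntegral hx hy₂ hθ h0 hab hbT)

lemma youngIntegral_smul_right (c : ℝ)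
    (hx : HolderBound T α Cx x) (hy : HolderBound T β Cy y)
    (hθ : 1 < α + β) {a b : ℝ} (h0 : 0 ≤ a) (hab : a ≤ b) (hbT : b ≤ T) :
    youngIntegral x (c • y) a b = c • youngIntegral x y a b :=
  youngIntegral_eq_of_tendsto <| by
    simpa only [riemannSum_smul_right] using
      (tendsto_riemannSum_youngIntegral hx hy hθ h0 hab hbT).const_smul c

end Young

end

open Young

/-- Bilinearity and continuity of the Young integral
`(x,y) ↦ ∫₀^T x dy` defined by the sewing lemma, with the bound
`‖∫₀^T x dy - x₀(y_T - y₀)‖ ≤ C‖x‖_α‖y‖_β T^{α+β}`, `C` depending only on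
`α + β`. -/
theorem young_integral_bilinear (α β : ℝ)
    (hα : α ∈ Set.Ioc (0:ℝ) 1) (hβ : β ∈ Set.Ioc (0:ℝ) 1) (hαβ : 1 < α + β) :
    ∃ C : ℝ, 0 < C ∧
      ∀ (U : Type) [NormedAddCommGroup U] [NormedSpace ℝ U] [CompleteSpace U]
        (V : Type) [NormedAddCommGroup V] [NormedSpace ℝ V] [CompleteSpace V]
        (T : ℝ), 0 < T →
        ∃ J : (ℝ → U →L[ℝ] V) → (ℝ → U) → V,
          -- `J x y` is the endpoint value of the path given by the sewing lemma,
          -- and satisfies the quantitative bound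
          (∀ (x : ℝ → U →L[ℝ] V) (y : ℝ → U) (Cx Cy : ℝ), 0 ≤ Cx → 0 ≤ Cy →
            (∀ s t : ℝ, 0 ≤ s → s ≤ t → t ≤ T → ‖x t - x s‖ ≤ Cx * (t - s) ^ α) →
            (∀ s t : ℝ, 0 ≤ s → s ≤ t → t ≤ T → ‖y t - y s‖ ≤ Cy * (t - s) ^ β) →
            (∃ I : ℝ → V, I 0 = 0 ∧ I T = J x y ∧
              ∀ s t : ℝ, 0 ≤ s → s ≤ t → t ≤ T →
                ‖I t - I s - x s (y t - y s)‖ ≤ C * Cx * Cy * (t - s) ^ (α + β)) ∧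
            ‖J x y - x 0 (y T - y 0)‖ ≤ C * Cx * Cy * T ^ (α + β)) ∧
          -- bilinearity in the integrand
          (∀ x₁ x₂ : ℝ → U →L[ℝ] V, ∀ y : ℝ → U,
            HolOn T α x₁ → HolOn T α x₂ → HolOn T β y →
            J (x₁ + x₂) y = J x₁ y + J x₂ y) ∧
          (∀ (c : ℝ) (x : ℝ → U →L[ℝ] V) (y : ℝ → U),
            HolOn T α x → HolOn T β y → J (c • x) y = c • J x y) ∧
          -- bilinearity in the integrator
          (∀ (x : ℝ → U →L[ℝ] V) (y₁ y₂ : ℝ → U),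
            HolOn T α x → HolOn T β y₁ → HolOn T β y₂ →
            J x (y₁ + y₂) = J x y₁ + J x y₂) ∧
          (∀ (c : ℝ) (x : ℝ → U →L[ℝ] V) (y : ℝ → U),
            HolOn T α x → HolOn T β y → J x (c • y) = c • J x y) := by
  obtain ⟨hα, -⟩ := hα
  obtain ⟨hβ, -⟩ := hβ
  refine ⟨youngConst (α + β), youngConst_pos hαβ, fun U _ _ _ V _ _ _ T hT =>
    ⟨fun x y => youngIntegral x y 0 T, ?_, ?_, ?_, ?_, ?_⟩⟩
  · intro x y Cx Cy hCx hCy hx hy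
    have hx : HolderBound T α Cx x := ⟨hα, hCx, hx⟩
    have hy : HolderBound T β Cy y := ⟨hβ, hCy, hy⟩
    refine ⟨⟨youngIntegral x y 0, youngIntegral_self 0, rfl, fun s t hs hst htT => ?_⟩, ?_⟩
    · rw [← youngIntegral_add hx hy hαβ le_rfl hs hst htT, add_sub_cancel_left]
      exact norm_youngIntegral_sub_germ_le hx hy hαβ hs hst htT
    · simpa only [sub_zero, germ] using
        norm_youngIntegral_sub_germ_le hx hy hαβ le_rfl hT.le le_rfl
  · rintro x₁ x₂ y ⟨C₁, hC₁, hx₁⟩ ⟨C₂, hC₂, hx₂⟩ ⟨Cy, hCy, hy⟩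
    exact youngIntegral_add_left ⟨hα, hC₁, hx₁⟩ ⟨hα, hC₂, hx₂⟩ ⟨hβ, hCy, hy⟩ hαβ le_rfl hT.le
      le_rfl
  · rintro c x y ⟨Cx, hCx, hx⟩ ⟨Cy, hCy, hy⟩
    exact youngIntegral_smul_left c ⟨hα, hCx, hx⟩ ⟨hβ, hCy, hy⟩ hαβ le_rfl hT.le le_rfl
  · rintro x y₁ y₂ ⟨Cx, hCx, hx⟩ ⟨C₁, hC₁, hy₁⟩ ⟨C₂, hC₂, hy₂⟩
    exact youngIntegral_add_right ⟨hα, hCx, hx⟩ ⟨hβ, hC₁, hy₁⟩ ⟨hβ, hC₂, hy₂⟩ hαβ le_rfl hT.le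
      le_rfl
  · rintro c x y ⟨Cx, hCx, hx⟩ ⟨Cy, hCy, hy⟩
    exact youngIntegral_smul_right c ⟨hα, hCx, hx⟩ ⟨hβ, hCy, hy⟩ hαβ le_rfl hT.le le_rfl
end

section
/- Let α ∈ (1/3, 1/2], (X, 𝕏) a weak geometric α-Hölder rough path over ℝ^ℓ with bounds ‖X‖_α, ‖𝕏‖_{2α} finite, and let (a, a') be an L(ℝ^ℓ, ℝ^d)-valued path controlled by X: a_t − a_s = a'_s X_{ts} + r_{ts} with ‖a'‖_{α-Höl} and ‖r‖_{2α-Höl} finite and a' bounded. Then the two-index map μ_{ts} := a_s X_{ts} + a'_s 𝕏_{ts} is almost-additive with exponent 3α > 1: |μ_{ts} − μ_{tu} − μ_{us}| ≤ (‖r‖_{2α}‖X‖_α + ‖a'‖_{α}‖𝕏‖_{2α})|t−s|^{3α}, for all s ≤ u ≤ t. -/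
/-- The germ `μ_{ts} = a_s X_{ts} + a'_s 𝕏_{ts}` of the rough
integral of a controlled path `(a, a')` against a rough path `(X, 𝕏)` is
almost-additive with exponent `3α`:
`‖μ_{ts} − μ_{tu} − μ_{us}‖ ≤ (‖r‖_{2α}‖X‖_α + ‖a'‖_α‖𝕏‖_{2α})|t-s|^{3α}`.
Here the second level `𝕏` takes values in a Banach space `W` receiving the
tensor product via a bilinear map `otimes`, and `A_s` is `a'_s` viewed as a
linear map on `W` through the identification `A s (u ⊗ v) = a'_s u v`. -/
theorem rough_integral_germ_almost_additive
    (E F W : Type*) [NormedAddCommGroup E] [NormedSpace ℝ E]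
    [NormedAddCommGroup F] [NormedSpace ℝ F]
    [NormedAddCommGroup W] [NormedSpace ℝ W]
    (T α : ℝ) (hT : 0 < T) (hα : α ∈ Set.Ioc (1/3 : ℝ) (1/2 : ℝ))
    (x : ℝ → E) (𝕏 : ℝ → ℝ → W) (otimes : E →L[ℝ] E →L[ℝ] W)
    (CX C𝕏 Ca' Cr : ℝ) (hCX : 0 ≤ CX) (hC𝕏 : 0 ≤ C𝕏) (hCa' : 0 ≤ Ca') (hCr : 0 ≤ Cr)
    (hX : ∀ s t : ℝ, 0 ≤ s → s ≤ t → t ≤ T → ‖x t - x s‖ ≤ CX * (t - s) ^ α)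
    (h𝕏 : ∀ s t : ℝ, 0 ≤ s → s ≤ t → t ≤ T → ‖𝕏 t s‖ ≤ C𝕏 * (t - s) ^ (2*α))
    (hChen : ∀ s u t : ℝ, 0 ≤ s → s ≤ u → u ≤ t → t ≤ T →
      𝕏 t s = 𝕏 t u + 𝕏 u s + otimes (x u - x s) (x t - x u))
    (a : ℝ → E →L[ℝ] F) (a' : ℝ → E →L[ℝ] E →L[ℝ] F) (A : ℝ → W →L[ℝ] F)
    (hlift : ∀ (s : ℝ) (u v : E), A s (otimes u v) = a' s u v)
    (ha' : ∀ s t : ℝ, 0 ≤ s → s ≤ t → t ≤ T → ‖a' t - a' s‖ ≤ Ca' * (t - s) ^ α)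
    (hA : ∀ s t : ℝ, 0 ≤ s → s ≤ t → t ≤ T → ‖A t - A s‖ ≤ Ca' * (t - s) ^ α)
    (hr : ∀ s t : ℝ, 0 ≤ s → s ≤ t → t ≤ T →
      ‖a t - a s - (a' s) (x t - x s)‖ ≤ Cr * (t - s) ^ (2*α)) :
    ∀ s u t : ℝ, 0 ≤ s → s ≤ u → u ≤ t → t ≤ T →
      ‖(a s (x t - x s) + A s (𝕏 t s))
          - (a u (x t - x u) + A u (𝕏 t u))
          - (a s (x u - x s) + A s (𝕏 u s))‖ ≤
        (Cr * CX + Ca' * C𝕏) * (t - s) ^ (3*α) := by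
  intro s u t hs hsu hut htT
  have hsT : s ≤ T := (hsu.trans hut).trans htT
  have huT : u ≤ T := hut.trans htT
  have hu0 : 0 ≤ u := hs.trans hsu
  have hα0 : 0 < α := lt_trans (by norm_num) hα.1
  have h1 := hr s u hs hsu huT
  have h2 := hX u t hu0 hut htT
  have h3 := hA s u hs hsu huT
  have h4 := h𝕏 u t hu0 hut htT
  have key : (a s (x t - x s) + A s (𝕏 t s))
          - (a u (x t - x u) + A u (𝕏 t u))
          - (a s (x u - x s) + A s (𝕏 u s))
      = -((a u - a s - a' s (x u - x s)) (x t - x u)) + -((A u - A s) (𝕏 t u)) := by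
    rw [hChen s u t hs hsu hut htT]
    have hl := hlift s (x u - x s) (x t - x u)
    simp only [map_add, map_sub, ContinuousLinearMap.sub_apply] at hl ⊢
    rw [hl]
    abel
  rw [key]
  have b1 : ‖(a u - a s - a' s (x u - x s)) (x t - x u)‖
      ≤ (Cr * (u - s) ^ (2*α)) * (CX * (t - u) ^ α) := by
    calc ‖(a u - a s - a' s (x u - x s)) (x t - x u)‖
        ≤ ‖a u - a s - a' s (x u - x s)‖ * ‖x t - x u‖ :=
          ContinuousLinearMap.le_opNorm _ _
      _ ≤ (Cr * (u - s) ^ (2*α)) * (CX * (t - u) ^ α) := by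
          · apply mul_le_mul h1 h2 (norm_nonneg _)
            exact mul_nonneg hCr (Real.rpow_nonneg (by linarith) _)
  have b2 : ‖(A u - A s) (𝕏 t u)‖
      ≤ (Ca' * (u - s) ^ α) * (C𝕏 * (t - u) ^ (2*α)) := by
    calc ‖(A u - A s) (𝕏 t u)‖ ≤ ‖A u - A s‖ * ‖𝕏 t u‖ :=
          ContinuousLinearMap.le_opNorm _ _
      _ ≤ (Ca' * (u - s) ^ α) * (C𝕏 * (t - u) ^ (2*α)) := by
          apply mul_le_mul h3 h4 (norm_nonneg _)
          exact mul_nonneg hCa' (Real.rpow_nonneg (by linarith) _)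
  have hus : (0:ℝ) ≤ u - s := by linarith
  have htu : (0:ℝ) ≤ t - u := by linarith
  have hts : (0:ℝ) ≤ t - s := by linarith
  have hus' : u - s ≤ t - s := by linarith
  have htu' : t - u ≤ t - s := by linarith
  have hsplit : (t - s) ^ (3*α) = (t - s) ^ (2*α) * (t - s) ^ α := by
    rw [← Real.rpow_add' hts (by linarith)]
    ring_nf
  calc ‖-((a u - a s - a' s (x u - x s)) (x t - x u)) + -((A u - A s) (𝕏 t u))‖
      ≤ ‖-((a u - a s - a' s (x u - x s)) (x t - x u))‖ + ‖-((A u - A s) (𝕏 t u))‖ :=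
        norm_add_le _ _
    _ = ‖(a u - a s - a' s (x u - x s)) (x t - x u)‖ + ‖(A u - A s) (𝕏 t u)‖ := by
        rw [norm_neg, norm_neg]
    _ ≤ (Cr * (u - s) ^ (2*α)) * (CX * (t - u) ^ α)
        + (Ca' * (u - s) ^ α) * (C𝕏 * (t - u) ^ (2*α)) := add_le_add b1 b2
    _ ≤ (Cr * (t - s) ^ (2*α)) * (CX * (t - s) ^ α)
        + (Ca' * (t - s) ^ α) * (C𝕏 * (t - s) ^ (2*α)) := by
        gcongr
    _ = (Cr * CX + Ca' * C𝕏) * (t - s) ^ (3*α) := by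
        rw [hsplit]; ring
end
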